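/- arXiv:1007.5302 — 3 statements merged into one kernel-verified Lean document; each statement's English description precedes it below -/
import Mathlib

section
/- Let f : ℝ^d → ℝ be bounded and continuous, and define u(t,x) = ∫_{ℝ^d} f(y) K^{BS}(t;x,y) dy for t ∈ (0,∞)ⁿ and x ∈ ℝ^d. Then u is bounded and, for every j ∈ {1,…,n}, every t ∈ (0,∞)ⁿ and every x ∈ ℝ^d, u satisfies the heat-type PDE ∂u/∂t_j (t,x) = (1/2)(∏_{i∈{1,…,n}\{j}} t_i) Δ_x u(t,x). -/
open MeasureTheory Real Filter Finset

noncomputable section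

/-- Partial derivative of `g` in the `k`-th coordinate direction, at `x`. -/
def pd {m : ℕ} {E : Type*} [NormedAddCommGroup E] [NormedSpace ℝ E]
    (k : Fin m) (g : (Fin m → ℝ) → E) (x : Fin m → ℝ) : E :=
  deriv (fun h : ℝ => g (Function.update x k h)) (x k)

/-- The Laplacian of `g : ℝ^m → E`, as the sum of its second coordinate partials. -/
def lap {m : ℕ} {E : Type*} [NormedAddCommGroup E] [NormedSpace ℝ E]
    (g : (Fin m → ℝ) → E) (x : Fin m → ℝ) : E :=
  ∑ k, pd k (pd k g) x

/-- The `n`-parameter `d`-dimensional Brownian sheet kernel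
`K^{BS}(t;x,y) = (2π t₁⋯t_n)^{-d/2} exp(-|x-y|²/(2 t₁⋯t_n))`. -/
def Kbs (n d : ℕ) (t : Fin n → ℝ) (x y : Fin d → ℝ) : ℝ :=
  (2 * π * ∏ i, t i) ^ (-(d : ℝ) / 2) *
    Real.exp (-(∑ k, (x k - y k) ^ 2) / (2 * ∏ i, t i))

/-- The one-dimensional heat (Brownian motion transition) kernel
`K^{BM}(t;0,s) = (2πt)^{-1/2} exp(-s²/(2t))`. -/
def Kbm (t s : ℝ) : ℝ :=
  (2 * π * t) ^ (-(1 : ℝ) / 2) * Real.exp (-(s ^ 2) / (2 * t))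

/-- The `n`-parameter `d`-dimensional complex propagator kernel
`p_{is}(x,y) = (2πi s₁⋯s_n)^{-d/2} exp(-|x-y|²/(2i s₁⋯s_n))` (principal branch). -/
def pProp (n d : ℕ) (s : Fin n → ℝ) (x y : Fin d → ℝ) : ℂ :=
  (2 * (π : ℂ) * Complex.I * ∏ i, (s i : ℂ)) ^ (-(d : ℂ) / 2) *
    Complex.exp (-((∑ k, (x k - y k) ^ 2 : ℝ) : ℂ) /
      (2 * Complex.I * ∏ i, (s i : ℂ)))

/-!
Write `u t x = P_{t₁⋯tₙ} f x`, where `P_c f` is the convolution of `f` with the Gaussian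
heat kernel of variance `c`. The kernel is a product of one-dimensional Gaussian densities,
so it is a probability density and `|P_c f| ≤ sup |f|`. Differentiating under the integral
sign gives the heat equation `∂_c P_c f = ½ Δ P_c f`: near a given point, the derivatives of
the kernel in `c` and in each `xₖ` are dominated by a multiple of a heat kernel of larger
variance. The system follows by the chain rule, since `∂(t₁⋯tₙ)/∂tⱼ = ∏_{i ≠ j} tᵢ`.
-/

open ProbabilityTheory

namespace BrownianSheet

variable {d : ℕ}

lemma pd_pd_eq_deriv_deriv {m : ℕ} {E : Type*} [NormedAddCommGroup E] [NormedSpace ℝ E]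
    (k : Fin m) (g : (Fin m → ℝ) → E) (x : Fin m → ℝ) :
    pd k (pd k g) x = deriv (deriv fun h => g (Function.update x k h)) (x k) := by
  simp only [pd, Function.update_idem, Function.update_self]

def sqDist (x y : Fin d → ℝ) : ℝ := ∑ k, (x k - y k) ^ 2

def heatKernel (d : ℕ) (c r : ℝ) : ℝ :=
  (2 * π * c) ^ (-(d : ℝ) / 2) * Real.exp (-r / (2 * c))

def heatSemigroup (f : (Fin d → ℝ) → ℝ) (c : ℝ) (x : Fin d → ℝ) : ℝ :=
  ∫ y, f y * heatKernel d c (sqDist x y)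

lemma sqDist_nonneg (x y : Fin d → ℝ) : 0 ≤ sqDist x y :=
  sum_nonneg fun _ _ => sq_nonneg _

@[fun_prop]
lemma continuous_sqDist (x : Fin d → ℝ) : Continuous (sqDist x) := by
  unfold sqDist; fun_prop

lemma sqDist_update (x y : Fin d → ℝ) (k : Fin d) (h : ℝ) :
    sqDist (Function.update x k h) y = (h - y k) ^ 2 + ∑ l ∈ univ.erase k, (x l - y l) ^ 2 := by
  rw [sqDist, ← add_sum_erase _ _ (mem_univ k), Function.update_self]
  congr 1
  refine sum_congr rfl fun l hl => ?_
  rw [Function.update_of_ne (ne_of_mem_erase hl)]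

lemma hasDerivAt_sqDist_update (x y : Fin d → ℝ) (k : Fin d) (h : ℝ) :
    HasDerivAt (fun h => sqDist (Function.update x k h) y) (2 * (h - y k)) h := by
  simp_rw [sqDist_update]
  refine ((((hasDerivAt_id h).sub_const (y k)).pow 2).add_const _).congr_deriv ?_
  simp

lemma heatKernel_nonneg {c : ℝ} (hc : 0 ≤ c) (r : ℝ) : 0 ≤ heatKernel d c r :=
  mul_nonneg (rpow_nonneg (by positivity) _) (exp_nonneg _)

@[fun_prop]
lemma continuous_heatKernel (c : ℝ) : Continuous (heatKernel d c) := by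
  unfold heatKernel; fun_prop

lemma exp_neg_div_eq_mul_heatKernel {c : ℝ} (hc : 0 < c) (r : ℝ) :
    Real.exp (-r / (2 * c)) = (2 * π * c) ^ ((d : ℝ) / 2) * heatKernel d c r := by
  rw [heatKernel, ← mul_assoc, ← rpow_add (by positivity),
    show (d : ℝ) / 2 + -(d : ℝ) / 2 = 0 by ring, rpow_zero, one_mul]

lemma heatKernel_sqDist_eq_prod {c : ℝ} (hc : 0 < c) (x y : Fin d → ℝ) :
    heatKernel d c (sqDist x y) = ∏ k, gaussianPDFReal (x k) c.toNNReal (y k) := by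
  simp only [gaussianPDFReal, Real.coe_toNNReal _ hc.le, prod_mul_distrib, prod_const, card_univ,
    Fintype.card_fin, ← exp_sum, heatKernel, sqDist]
  congr 1
  · rw [sqrt_eq_rpow, ← rpow_neg_one, ← rpow_mul (by positivity), ← rpow_natCast,
      ← rpow_mul (by positivity)]
    congr 1; ring
  · rw [← sum_div, ← sum_neg_distrib]
    simp_rw [sub_sq_comm]

lemma integrable_heatKernel_sqDist {c : ℝ} (hc : 0 < c) (x : Fin d → ℝ) :
    Integrable fun y => heatKernel d c (sqDist x y) := by
  simp_rw [heatKernel_sqDist_eq_prod hc]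
  exact Integrable.fintype_prod fun k => integrable_gaussianPDFReal (x k) _

lemma integral_heatKernel_sqDist {c : ℝ} (hc : 0 < c) (x : Fin d → ℝ) :
    ∫ y, heatKernel d c (sqDist x y) = 1 := by
  simp_rw [heatKernel_sqDist_eq_prod hc]
  rw [integral_fintype_prod_volume_eq_prod (fun k => gaussianPDFReal (x k) c.toNNReal)]
  simp [integral_gaussianPDFReal_eq_one _ (Real.toNNReal_pos.2 hc).ne']

lemma hasDerivAt_heatKernel (c r : ℝ) :
    HasDerivAt (heatKernel d c) (-heatKernel d c r / (2 * c)) r := by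
  refine (((hasDerivAt_neg r).div_const (2 * c)).exp.const_mul _).congr_deriv ?_
  unfold heatKernel
  ring

lemma hasDerivAt_heatKernel_time {c : ℝ} (hc : 0 < c) (r : ℝ) :
    HasDerivAt (fun c => heatKernel d c r)
      ((r / (2 * c ^ 2) - d / (2 * c)) * heatKernel d c r) c := by
  have h2πc : 0 < 2 * π * c := by positivity
  have hpow := ((hasDerivAt_id c).const_mul (2 * π)).rpow_const (p := -(d : ℝ) / 2)
    (Or.inl h2πc.ne')
  have hexp := ((hasDerivAt_const c (-r)).fun_div ((hasDerivAt_id c).const_mul 2)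
    (by simp [hc.ne'])).exp
  refine (hpow.mul hexp).congr_deriv ?_
  rw [heatKernel, id, rpow_sub h2πc, rpow_one]
  field_simp
  ring

lemma one_add_mul_exp_neg_div_le {a r : ℝ} (ha : 0 < a) (hr : 0 ≤ r) :
    (1 + r) * Real.exp (-r / a) ≤ (1 + 2 * a) * Real.exp (-r / (2 * a)) := by
  have hsplit : Real.exp (-r / a) = Real.exp (-r / (2 * a)) * Real.exp (-r / (2 * a)) := by
    rw [← exp_add]; congr 1; field_simp; ring
  have hle_one : Real.exp (-r / (2 * a)) ≤ 1 :=
    exp_le_one_iff.2 (div_nonpos_of_nonpos_of_nonneg (by linarith) (by linarith))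
  have hmul_le : r * Real.exp (-r / (2 * a)) ≤ 2 * a := by
    rw [neg_div, exp_neg, ← div_eq_mul_inv, div_le_iff₀ (exp_pos _)]
    calc r = 2 * a * (r / (2 * a)) := by field_simp
      _ ≤ 2 * a * Real.exp (r / (2 * a)) := by
        gcongr; linarith [add_one_le_exp (r / (2 * a))]
  calc (1 + r) * Real.exp (-r / a)
      = (Real.exp (-r / (2 * a)) + r * Real.exp (-r / (2 * a))) * Real.exp (-r / (2 * a)) := by
        rw [hsplit]; ring
    _ ≤ (1 + 2 * a) * Real.exp (-r / (2 * a)) := by gcongr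

lemma exists_abs_time_deriv_heatKernel_le {c₀ : ℝ} (hc₀ : 0 < c₀) :
    ∃ C, ∀ c ∈ Metric.ball c₀ (c₀ / 2), ∀ r, 0 ≤ r →
      |(r / (2 * c ^ 2) - d / (2 * c)) * heatKernel d c r| ≤ C * heatKernel d (3 * c₀) r := by
  set A := 2 / c₀ ^ 2 + d / c₀
  refine ⟨A * (π * c₀) ^ (-(d : ℝ) / 2) * (1 + 2 * (3 * c₀)) *
    (2 * π * (3 * c₀)) ^ ((d : ℝ) / 2), fun c hc r hr => ?_⟩
  rw [Metric.mem_ball, Real.dist_eq, abs_lt] at hc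
  have hc_pos : 0 < c := by linarith
  have hcoeff : |r / (2 * c ^ 2) - d / (2 * c)| ≤ A * (1 + r) := by
    have h1 : r / (2 * c ^ 2) ≤ 2 * r / c₀ ^ 2 := by
      have hc_sq : c₀ ^ 2 ≤ 4 * c ^ 2 := by nlinarith
      rw [div_le_div_iff₀ (by positivity) (by positivity)]
      nlinarith [mul_le_mul_of_nonneg_left hc_sq hr]
    have h2 : (d : ℝ) / (2 * c) ≤ d / c₀ := by
      rw [div_le_div_iff₀ (by positivity) hc₀]; nlinarith [(d.cast_nonneg : (0 : ℝ) ≤ d)]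
    have h3 : 0 ≤ r / (2 * c ^ 2) := by positivity
    have h4 : (0 : ℝ) ≤ d / (2 * c) := by positivity
    have h5 : A * (1 + r) = 2 * r / c₀ ^ 2 + d / c₀ + (2 / c₀ ^ 2 + r * (d / c₀)) := by
      simp only [A]; ring
    have h6 : 0 ≤ 2 / c₀ ^ 2 + r * (d / c₀) := by positivity
    calc |r / (2 * c ^ 2) - d / (2 * c)| ≤ r / (2 * c ^ 2) + d / (2 * c) :=
          abs_sub_le_iff.2 ⟨by linarith, by linarith⟩
      _ ≤ A * (1 + r) := by linarith
  have hkernel :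
      heatKernel d c r ≤ (π * c₀) ^ (-(d : ℝ) / 2) * Real.exp (-r / (3 * c₀)) := by
    unfold heatKernel
    gcongr ?_ * Real.exp ?_
    · exact rpow_le_rpow_of_nonpos (by positivity) (by nlinarith [pi_pos])
        (by have := (d.cast_nonneg : (0 : ℝ) ≤ d); linarith)
    · rw [neg_div, neg_div, neg_le_neg_iff]
      exact div_le_div_of_nonneg_left hr (by positivity) (by linarith)
  calc |(r / (2 * c ^ 2) - d / (2 * c)) * heatKernel d c r|
      = |r / (2 * c ^ 2) - d / (2 * c)| * heatKernel d c r := by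
        rw [abs_mul, abs_of_nonneg (heatKernel_nonneg hc_pos.le r)]
    _ ≤ A * (1 + r) * ((π * c₀) ^ (-(d : ℝ) / 2) * Real.exp (-r / (3 * c₀))) :=
        mul_le_mul hcoeff hkernel (heatKernel_nonneg hc_pos.le r) (by positivity)
    _ = A * (π * c₀) ^ (-(d : ℝ) / 2) * ((1 + r) * Real.exp (-r / (3 * c₀))) := by ring
    _ ≤ A * (π * c₀) ^ (-(d : ℝ) / 2) *
          ((1 + 2 * (3 * c₀)) * Real.exp (-r / (2 * (3 * c₀)))) :=
        mul_le_mul_of_nonneg_left (one_add_mul_exp_neg_div_le (by positivity) hr)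
          (by positivity)
    _ = _ := by rw [exp_neg_div_eq_mul_heatKernel (d := d) (by positivity)]; ring

/-- Shifting the centre by less than `1` costs the factor `exp (1 / (2 * c))` and doubles the
variance, since `s² ≤ 2 t² + 2` when `|t - s| < 1`; absorbing the factor `1 + t²` doubles it
again. -/
lemma exists_one_add_sq_mul_heatKernel_le {c : ℝ} (hc : 0 < c) :
    ∃ C, ∀ h h₀ w R : ℝ, dist h h₀ < 1 → 0 ≤ R →
      (1 + (h - w) ^ 2) * heatKernel d c ((h - w) ^ 2 + R)
        ≤ C * heatKernel d (4 * c) ((h₀ - w) ^ 2 + R) := by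
  refine ⟨3 * (2 * π * c) ^ (-(d : ℝ) / 2) * Real.exp (1 / (2 * c)) * (1 + 2 * (4 * c)) *
    (2 * π * (4 * c)) ^ ((d : ℝ) / 2), fun h h₀ w R hh hR => ?_⟩
  rw [Real.dist_eq, abs_lt] at hh
  set t := h - w
  set s := h₀ - w
  set Q := s ^ 2 + R
  have hts : (t - s) ^ 2 < 1 := by
    have : t - s = h - h₀ := by simp only [t, s]; ring
    rw [this]; nlinarith
  have hpoly : 1 + t ^ 2 ≤ 3 * (1 + Q) := by
    simp only [Q]; nlinarith [sq_nonneg (s - (t - s))]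
  have hexp : Real.exp (-(t ^ 2 + R) / (2 * c))
      ≤ Real.exp (1 / (2 * c)) * Real.exp (-Q / (4 * c)) := by
    rw [← exp_add, exp_le_exp, ← sub_nonneg]
    have : 1 / (2 * c) + -Q / (4 * c) - -(t ^ 2 + R) / (2 * c)
        = (2 + 2 * (t ^ 2 + R) - Q) / (4 * c) := by field_simp; ring
    rw [this]
    exact div_nonneg (by nlinarith [sq_nonneg (t + (t - s))]) (by positivity)
  calc (1 + t ^ 2) * heatKernel d c (t ^ 2 + R)
      ≤ 3 * (1 + Q) * ((2 * π * c) ^ (-(d : ℝ) / 2) *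
          (Real.exp (1 / (2 * c)) * Real.exp (-Q / (4 * c)))) := by
        unfold heatKernel; gcongr
    _ = 3 * (2 * π * c) ^ (-(d : ℝ) / 2) * Real.exp (1 / (2 * c)) *
          ((1 + Q) * Real.exp (-Q / (4 * c))) := by ring
    _ ≤ 3 * (2 * π * c) ^ (-(d : ℝ) / 2) * Real.exp (1 / (2 * c)) *
          ((1 + 2 * (4 * c)) * Real.exp (-Q / (2 * (4 * c)))) := by
        exact mul_le_mul_of_nonneg_left (one_add_mul_exp_neg_div_le (by positivity)
          (by positivity)) (by positivity)
    _ = _ := by rw [exp_neg_div_eq_mul_heatKernel (d := d) (by positivity)]; ring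

lemma hasDerivAt_integral_mul_of_dominated {α : Type*} [MeasurableSpace α] {μ : Measure α}
    {f : α → ℝ} {M : ℝ} (hf : ∀ y, |f y| ≤ M) (hfm : AEStronglyMeasurable f μ)
    {K K' : ℝ → α → ℝ} {p₀ ε : ℝ} (hε : 0 < ε) {bound : α → ℝ}
    (hKm : ∀ p, AEStronglyMeasurable (K p) μ) (hK : Integrable (K p₀) μ)
    (hK'm : AEStronglyMeasurable (K' p₀) μ)
    (hK' : ∀ y, ∀ p ∈ Metric.ball p₀ ε, HasDerivAt (K · y) (K' p y) p)
    (hbound : ∀ y, ∀ p ∈ Metric.ball p₀ ε, |K' p y| ≤ bound y)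
    (hbound_int : Integrable bound μ) :
    Integrable (fun y => f y * K' p₀ y) μ ∧
      HasDerivAt (fun p => ∫ y, f y * K p y ∂μ) (∫ y, f y * K' p₀ y ∂μ) p₀ :=
  hasDerivAt_integral_of_dominated_loc_of_deriv_le (Metric.ball_mem_nhds p₀ hε)
    (Eventually.of_forall fun p => hfm.mul (hKm p)) (hK.bdd_mul hfm (ae_of_all _ hf))
    (hfm.mul hK'm)
    (ae_of_all _ fun y p hp => by
      rw [norm_mul, Real.norm_eq_abs, Real.norm_eq_abs]
      exact mul_le_mul (hf y) (hbound y p hp) (abs_nonneg _) ((abs_nonneg _).trans (hf y)))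
    (hbound_int.const_mul M) (ae_of_all _ fun y p hp => (hK' y p hp).const_mul (f y))

lemma exists_abs_space_derivs_heatKernel_le {c : ℝ} (hc : 0 < c) :
    ∃ C, ∀ (x y : Fin d → ℝ) (k : Fin d) (h h₀ : ℝ), dist h h₀ < 1 →
      |-((h - y k) / c) * heatKernel d c (sqDist (Function.update x k h) y)|
          ≤ C * heatKernel d (4 * c) (sqDist (Function.update x k h₀) y) ∧
      |((h - y k) ^ 2 / c ^ 2 - 1 / c) * heatKernel d c (sqDist (Function.update x k h) y)|
          ≤ C * heatKernel d (4 * c) (sqDist (Function.update x k h₀) y) := by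
  obtain ⟨C, hC⟩ := exists_one_add_sq_mul_heatKernel_le (d := d) hc
  refine ⟨(1 / c + 1 / c ^ 2) * C, fun x y k h h₀ hh => ?_⟩
  set t := h - y k
  set G := heatKernel d c (sqDist (Function.update x k h) y)
  have hG : 0 ≤ G := heatKernel_nonneg hc.le _
  have hmain : (1 / c + 1 / c ^ 2) * ((1 + t ^ 2) * G)
      ≤ (1 / c + 1 / c ^ 2) * C * heatKernel d (4 * c) (sqDist (Function.update x k h₀) y) := by
    rw [mul_assoc]
    refine mul_le_mul_of_nonneg_left ?_ (by positivity)
    simp only [G, t, sqDist_update]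
    exact hC h h₀ (y k) _ hh (sum_nonneg fun _ _ => sq_nonneg _)
  have hc' : 0 < 1 / c := by positivity
  have hc'' : 0 < 1 / c ^ 2 := by positivity
  have ht : |t| ≤ 1 + t ^ 2 := by nlinarith [sq_abs t, sq_nonneg (|t| - 1)]
  constructor
  · refine le_trans ?_ hmain
    rw [abs_mul, abs_of_nonneg hG, abs_neg, abs_div, abs_of_pos hc, ← mul_assoc]
    gcongr
    rw [div_eq_mul_one_div, mul_comm]
    nlinarith [abs_nonneg t, sq_nonneg t]
  · refine le_trans ?_ hmain
    rw [abs_mul, abs_of_nonneg hG, ← mul_assoc]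
    gcongr
    have ht2 : 0 ≤ t ^ 2 / c ^ 2 := by positivity
    calc |t ^ 2 / c ^ 2 - 1 / c| ≤ t ^ 2 / c ^ 2 + 1 / c :=
          abs_sub_le_iff.2 ⟨by linarith, by linarith⟩
      _ ≤ _ := by rw [div_eq_mul_one_div (t ^ 2)]; nlinarith [sq_nonneg t]

section Semigroup

variable {f : (Fin d → ℝ) → ℝ} {M : ℝ}

lemma abs_heatSemigroup_le (hf : ∀ y, |f y| ≤ M) (hfm : AEStronglyMeasurable f) {c : ℝ}
    (hc : 0 < c) (x : Fin d → ℝ) : |heatSemigroup f c x| ≤ M := by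
  have hK := integrable_heatKernel_sqDist hc x
  calc |heatSemigroup f c x| ≤ ∫ y, |f y * heatKernel d c (sqDist x y)| :=
        abs_integral_le_integral_abs
    _ ≤ ∫ y, M * heatKernel d c (sqDist x y) := by
        refine integral_mono (hK.bdd_mul hfm (ae_of_all _ hf)).abs (hK.const_mul M) fun y => ?_
        rw [abs_mul, abs_of_nonneg (heatKernel_nonneg hc.le _)]
        exact mul_le_mul_of_nonneg_right (hf y) (heatKernel_nonneg hc.le _)
    _ = M := by rw [integral_const_mul, integral_heatKernel_sqDist hc x, mul_one]

lemma hasDerivAt_heatSemigroup_time (hf : ∀ y, |f y| ≤ M) (hfm : AEStronglyMeasurable f)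
    {c₀ : ℝ} (hc₀ : 0 < c₀) (x : Fin d → ℝ) :
    HasDerivAt (fun c => heatSemigroup f c x)
      (∫ y, f y * ((sqDist x y / (2 * c₀ ^ 2) - d / (2 * c₀)) * heatKernel d c₀ (sqDist x y)))
      c₀ := by
  obtain ⟨C, hC⟩ := exists_abs_time_deriv_heatKernel_le (d := d) hc₀
  refine (hasDerivAt_integral_mul_of_dominated hf hfm (half_pos hc₀)
    (fun c => Continuous.aestronglyMeasurable (by fun_prop))
    (integrable_heatKernel_sqDist hc₀ x) (Continuous.aestronglyMeasurable (by fun_prop))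
    (fun y c hc => hasDerivAt_heatKernel_time ?_ _)
    (fun y c hc => hC c hc _ (sqDist_nonneg x y))
    ((integrable_heatKernel_sqDist (by positivity) x).const_mul C)).2
  rw [Metric.mem_ball, Real.dist_eq, abs_lt] at hc
  linarith

variable {c : ℝ} (x : Fin d → ℝ) (k : Fin d)

lemma hasDerivAt_heatKernel_sqDist_update (y : Fin d → ℝ) (h : ℝ) :
    HasDerivAt (fun h => heatKernel d c (sqDist (Function.update x k h) y))
      (-((h - y k) / c) * heatKernel d c (sqDist (Function.update x k h) y)) h := by
  refine ((hasDerivAt_heatKernel c _).comp h (hasDerivAt_sqDist_update x y k h)).congr_deriv ?_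
  field_simp

lemma hasDerivAt_heatKernel_sqDist_update_deriv (y : Fin d → ℝ) (h : ℝ) :
    HasDerivAt (fun h => -((h - y k) / c) * heatKernel d c (sqDist (Function.update x k h) y))
      (((h - y k) ^ 2 / c ^ 2 - 1 / c) * heatKernel d c (sqDist (Function.update x k h) y)) h := by
  refine ((((hasDerivAt_id h).sub_const (y k)).div_const c).fun_neg.mul
    (hasDerivAt_heatKernel_sqDist_update x k y h)).congr_deriv ?_
  simp only [id]
  ring

lemma hasDerivAt_heatSemigroup_update (hf : ∀ y, |f y| ≤ M) (hfm : AEStronglyMeasurable f)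
    (hc : 0 < c) (h₀ : ℝ) :
    HasDerivAt (fun h => heatSemigroup f c (Function.update x k h))
      (∫ y, f y * (-((h₀ - y k) / c) * heatKernel d c (sqDist (Function.update x k h₀) y)))
      h₀ := by
  obtain ⟨C, hC⟩ := exists_abs_space_derivs_heatKernel_le (d := d) hc
  exact (hasDerivAt_integral_mul_of_dominated hf hfm one_pos
    (fun h => (Continuous.aestronglyMeasurable (by fun_prop)))
    (integrable_heatKernel_sqDist hc _) (Continuous.aestronglyMeasurable (by fun_prop))
    (fun y h _ => hasDerivAt_heatKernel_sqDist_update x k y h)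
    (fun y h hh => (hC x y k h h₀ hh).1)
    ((integrable_heatKernel_sqDist (by positivity) _).const_mul C)).2

lemma hasDerivAt_deriv_heatSemigroup_update (hf : ∀ y, |f y| ≤ M) (hfm : AEStronglyMeasurable f)
    (hc : 0 < c) (h₀ : ℝ) :
    Integrable (fun y => f y * (((h₀ - y k) ^ 2 / c ^ 2 - 1 / c) *
        heatKernel d c (sqDist (Function.update x k h₀) y))) ∧
      HasDerivAt (deriv fun h => heatSemigroup f c (Function.update x k h))
        (∫ y, f y * (((h₀ - y k) ^ 2 / c ^ 2 - 1 / c) *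
          heatKernel d c (sqDist (Function.update x k h₀) y))) h₀ := by
  obtain ⟨C, hC⟩ := exists_abs_space_derivs_heatKernel_le (d := d) hc
  have hbound := (integrable_heatKernel_sqDist (d := d) (by positivity : 0 < 4 * c)
    (Function.update x k h₀)).const_mul C
  rw [funext fun h => (hasDerivAt_heatSemigroup_update x k hf hfm hc h).deriv]
  exact hasDerivAt_integral_mul_of_dominated hf hfm one_pos
    (fun h => (Continuous.aestronglyMeasurable (by fun_prop)))
    (hbound.mono' (Continuous.aestronglyMeasurable (by fun_prop))
      (ae_of_all _ fun y => (hC x y k h₀ h₀ (Metric.mem_ball_self one_pos)).1))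
    (Continuous.aestronglyMeasurable (by fun_prop))
    (fun y h _ => hasDerivAt_heatKernel_sqDist_update_deriv x k y h)
    (fun y h hh => (hC x y k h h₀ hh).2) hbound

lemma lap_heatSemigroup (hf : ∀ y, |f y| ≤ M) (hfm : AEStronglyMeasurable f) (hc : 0 < c) :
    lap (heatSemigroup f c) x
      = ∫ y, f y * ((sqDist x y / c ^ 2 - d / c) * heatKernel d c (sqDist x y)) := by
  have hderiv (k : Fin d) := hasDerivAt_deriv_heatSemigroup_update x k hf hfm hc (x k)
  simp only [Function.update_eq_self] at hderiv
  rw [lap, sum_congr rfl fun k _ => (pd_pd_eq_deriv_deriv k _ x).trans (hderiv k).2.deriv,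
    ← integral_finsetSum _ fun k _ => (hderiv k).1]
  congr 1
  ext y
  have hsum : ∑ k, ((x k - y k) ^ 2 / c ^ 2 - 1 / c) = sqDist x y / c ^ 2 - d / c := by
    rw [sum_sub_distrib, ← sum_div, sum_const, card_univ, Fintype.card_fin, nsmul_eq_mul, sqDist]
    ring
  simp only [← mul_sum, ← sum_mul, hsum]

theorem hasDerivAt_heatSemigroup (hf : ∀ y, |f y| ≤ M) (hfm : AEStronglyMeasurable f)
    {c₀ : ℝ} (hc₀ : 0 < c₀) :
    HasDerivAt (fun c => heatSemigroup f c x) (1 / 2 * lap (heatSemigroup f c₀) x) c₀ := by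
  refine (hasDerivAt_heatSemigroup_time hf hfm hc₀ x).congr_deriv ?_
  rw [lap_heatSemigroup x hf hfm hc₀, ← integral_const_mul]
  congr 1
  ext y
  ring

end Semigroup

end BrownianSheet

open BrownianSheet

theorem brownian_sheet_heat_system_general
    (n d : ℕ)
    (f : (Fin d → ℝ) → ℝ) (hb : ∃ M, ∀ y, |f y| ≤ M) (hc : Continuous f)
    (u : (Fin n → ℝ) → (Fin d → ℝ) → ℝ)
    (hu : ∀ t x, u t x = ∫ y : Fin d → ℝ, f y * Kbs n d t x y) :
    (∃ M, ∀ (t : Fin n → ℝ) (x : Fin d → ℝ), (∀ i, 0 < t i) → |u t x| ≤ M) ∧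
    ∀ (j : Fin n) (t : Fin n → ℝ), (∀ i, 0 < t i) → ∀ x : Fin d → ℝ,
      pd j (fun t' => u t' x) t
        = (1 / 2) * (∏ i ∈ Finset.univ.erase j, t i) * lap (u t) x := by
  obtain ⟨M, hM⟩ := hb
  have hu_eq (t : Fin n → ℝ) : u t = heatSemigroup f (∏ i, t i) := funext (hu t)
  refine ⟨⟨M, fun t x ht => ?_⟩, fun j t ht x => ?_⟩
  · rw [hu_eq]
    exact abs_heatSemigroup_le hM hc.aestronglyMeasurable (prod_pos fun i _ => ht i) x
  · set P := ∏ i ∈ univ.erase j, t i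
    have hP : 0 < P := prod_pos fun i _ => ht i
    have hprod (h : ℝ) : ∏ i, Function.update t j h i = h * P := by
      rw [prod_update_of_mem (mem_univ j), sdiff_singleton_eq_erase]
    have hderiv := (hasDerivAt_heatSemigroup x hM hc.aestronglyMeasurable
      (mul_pos (ht j) hP)).comp (t j) (hasDerivAt_mul_const P)
    change deriv (fun h => u (Function.update t j h) x) (t j) = _
    simp only [hu_eq, hprod]
    refine hderiv.deriv.trans ?_
    rw [← mul_prod_erase univ t (mem_univ j)]
    ring

/-- `u(t,x) = ∫ f(y) K^{BS}(t;x,y) dy` is bounded and solves the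
heat-type system `∂u/∂t_j = (1/2)(∏_{i≠j} t_i) Δ_x u`. -/
theorem brownian_sheet_heat_system
    (n d : ℕ) (hn : 1 ≤ n) (hd : 1 ≤ d)
    (f : (Fin d → ℝ) → ℝ) (hb : ∃ M, ∀ y, |f y| ≤ M) (hc : Continuous f)
    (u : (Fin n → ℝ) → (Fin d → ℝ) → ℝ)
    (hu : ∀ t x, u t x = ∫ y : Fin d → ℝ, f y * Kbs n d t x y) :
    (∃ M, ∀ (t : Fin n → ℝ) (x : Fin d → ℝ), (∀ i, 0 < t i) → |u t x| ≤ M) ∧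
    ∀ (j : Fin n) (t : Fin n → ℝ), (∀ i, 0 < t i) → ∀ x : Fin d → ℝ,
      pd j (fun t' => u t' x) t
        = (1 / 2) * (∏ i ∈ Finset.univ.erase j, t i) * lap (u t) x :=
  brownian_sheet_heat_system_general n d f hb hc u hu
end
end

section
/- Let f : ℝ^d → ℝ be bounded and continuous, and define u(t,x) = ∫_{ℝ^d} f(y) K^{BS}(t;x,y) dy for t ∈ (0,∞)ⁿ, x ∈ ℝ^d. Then for every point t₀ ∈ ∂ℝ₊ⁿ (i.e., t₀ ∈ [0,∞)ⁿ with at least one zero coordinate) and every x₀ ∈ ℝ^d, u(s,y) → f(x₀) as (s,y) → (t₀,x₀) with s ∈ (0,∞)ⁿ and y ∈ ℝ^d; in particular u extends continuously to ∂ℝ₊ⁿ × ℝ^d with boundary value f(x). -/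
open MeasureTheory Real Filter Finset

noncomputable section

/-!
Substituting `y = x + √(t₁⋯t_n) • z` turns `u(t, x)` into the average of `f (x + √(t₁⋯t_n) • z)`
against the standard Gaussian density in `z`. Near a boundary point the product `t₁⋯t_n` tends to
`0`, so `f` bounded and continuous gives convergence to `f x₀` by dominated convergence.
-/

open ProbabilityTheory Module Topology

lemma integral_mul_rescaled_eq_integral_comp_add_smul {E : Type*} [NormedAddCommGroup E]
    [NormedSpace ℝ E] [MeasurableSpace E] [BorelSpace E] [FiniteDimensional ℝ E] (μ : Measure E)
    [μ.IsAddHaarMeasure] (f g : E → ℝ) (x : E) {c : ℝ} (hc : 0 < c) :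
    ∫ y, f y * ((c ^ finrank ℝ E)⁻¹ * g (c⁻¹ • (y - x))) ∂μ = ∫ z, f (x + c • z) * g z ∂μ := by
  have h := Measure.integral_comp_smul_of_nonneg μ (fun w => f (x + w) * g (c⁻¹ • w)) c
    (hR := hc.le)
  simp only [inv_smul_smul₀ hc.ne'] at h
  rw [h, ← integral_add_left_eq_self (fun y => f y * ((c ^ finrank ℝ E)⁻¹ * g (c⁻¹ • (y - x)))) x,
    smul_eq_mul, ← integral_const_mul]
  simp only [add_sub_cancel_left]
  congr 1 with w
  ring

lemma tendsto_integral_comp_add_smul_mul {E : Type*} [NormedAddCommGroup E] [NormedSpace ℝ E]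
    [MeasurableSpace E] [OpensMeasurableSpace E] {μ : Measure E} {g : E → ℝ}
    (hg : Integrable g μ) {f : E → ℝ} {M : ℝ} (hf : Continuous f) (hM : ∀ y, |f y| ≤ M)
    {α : Type*} {l : Filter α} [l.IsCountablyGenerated] {c : α → ℝ} {x : α → E} {x₀ : E}
    (hc : Tendsto c l (𝓝 0)) (hx : Tendsto x l (𝓝 x₀)) :
    Tendsto (fun a => ∫ z, f (x a + c a • z) * g z ∂μ) l (𝓝 (f x₀ * ∫ z, g z ∂μ)) := by
  rw [← integral_const_mul]
  refine tendsto_integral_filter_of_dominated_convergence (fun z => M * |g z|)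
    (Eventually.of_forall fun a => ?_) (Eventually.of_forall fun a => ae_of_all _ fun z => ?_)
    (hg.abs.const_mul M) (ae_of_all _ fun z => ?_)
  · exact (hf.comp (continuous_const.add (continuous_id.const_smul _))).aestronglyMeasurable.mul
      hg.aestronglyMeasurable
  · rw [norm_mul, Real.norm_eq_abs, Real.norm_eq_abs]
    exact mul_le_mul_of_nonneg_right (hM _) (abs_nonneg _)
  · have hshift : Tendsto (fun a => x a + c a • z) l (𝓝 x₀) := by
      simpa using hx.add (hc.smul_const z)
    exact ((hf.tendsto x₀).comp hshift).mul_const _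

def stdGaussianPDF (d : ℕ) (z : Fin d → ℝ) : ℝ :=
  ∏ k, gaussianPDFReal 0 1 (z k)

lemma integrable_stdGaussianPDF (d : ℕ) : Integrable (stdGaussianPDF d) :=
  Integrable.fintype_prod (f := fun _ => gaussianPDFReal 0 1) fun _ =>
    integrable_gaussianPDFReal 0 1

lemma integral_stdGaussianPDF (d : ℕ) : ∫ z, stdGaussianPDF d z = 1 := by
  simp [stdGaussianPDF, integral_fintype_prod_volume_eq_prod, integral_gaussianPDFReal_eq_one]

lemma Kbs_eq_stdGaussianPDF (n d : ℕ) {t : Fin n → ℝ} (ht : 0 < ∏ i, t i) (x y : Fin d → ℝ) :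
    Kbs n d t x y = (√(∏ i, t i) ^ d)⁻¹ * stdGaussianPDF d ((√(∏ i, t i))⁻¹ • (y - x)) := by
  set τ := ∏ i, t i
  have hcoef : (2 * π * τ) ^ (-(d : ℝ) / 2) = (√τ ^ d)⁻¹ * (√(2 * π))⁻¹ ^ d := by
    rw [← inv_pow, ← mul_pow, ← mul_inv, ← Real.sqrt_mul (by positivity), mul_comm τ,
      Real.sqrt_eq_rpow, ← Real.rpow_natCast, Real.inv_rpow (by positivity),
      ← Real.rpow_mul (by positivity), ← Real.rpow_neg (by positivity)]
    ring_nf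
  have hexp : -(∑ k, (x k - y k) ^ 2) / (2 * τ) = ∑ k, -((√τ)⁻¹ * (y k - x k)) ^ 2 / 2 := by
    rw [neg_div, Finset.sum_div, ← Finset.sum_neg_distrib]
    refine Finset.sum_congr rfl fun k _ => ?_
    rw [mul_pow, inv_pow, Real.sq_sqrt ht.le]
    field_simp
    ring
  simp only [Kbs, stdGaussianPDF, gaussianPDFReal, Pi.smul_apply, Pi.sub_apply, smul_eq_mul,
    NNReal.coe_one, mul_one, sub_zero, Finset.prod_mul_distrib, Finset.prod_const,
    Finset.card_univ, Fintype.card_fin, ← Real.exp_sum]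
  rw [hcoef, hexp]
  ring

lemma integral_mul_Kbs_eq (n d : ℕ) (f : (Fin d → ℝ) → ℝ) {t : Fin n → ℝ} (ht : 0 < ∏ i, t i)
    (x : Fin d → ℝ) :
    ∫ y, f y * Kbs n d t x y = ∫ z, f (x + √(∏ i, t i) • z) * stdGaussianPDF d z := by
  have hrank : finrank ℝ (Fin d → ℝ) = d := Module.finrank_fin_fun ℝ
  simp only [Kbs_eq_stdGaussianPDF n d ht, ← hrank,
    integral_mul_rescaled_eq_integral_comp_add_smul volume f _ x (Real.sqrt_pos.2 ht)]

theorem brownian_sheet_boundary_value_general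
    (n d : ℕ)
    (f : (Fin d → ℝ) → ℝ) (hb : ∃ M, ∀ y, |f y| ≤ M) (hc : Continuous f)
    (u : (Fin n → ℝ) → (Fin d → ℝ) → ℝ)
    (hu : ∀ t x, u t x = ∫ y : Fin d → ℝ, f y * Kbs n d t x y)
    (t₀ : Fin n → ℝ) (hbdry : ∃ i, t₀ i = 0)
    (x₀ : Fin d → ℝ) :
    Filter.Tendsto (fun p : (Fin n → ℝ) × (Fin d → ℝ) => u p.1 p.2)
      (nhdsWithin (t₀, x₀) {p : (Fin n → ℝ) × (Fin d → ℝ) | ∀ i, 0 < p.1 i})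
      (nhds (f x₀)) := by
  obtain ⟨M, hM⟩ := hb
  obtain ⟨i₀, hi₀⟩ := hbdry
  have hprod : Tendsto (fun p : (Fin n → ℝ) × (Fin d → ℝ) => ∏ i, p.1 i) (𝓝 (t₀, x₀))
      (𝓝 0) := by
    rw [← Finset.prod_eq_zero (Finset.mem_univ i₀) hi₀]
    exact (continuous_finsetProd _ fun i _ => (continuous_apply i).comp continuous_fst).tendsto _
  have hsqrt : Tendsto (fun p : (Fin n → ℝ) × (Fin d → ℝ) => √(∏ i, p.1 i)) (𝓝 (t₀, x₀))
      (𝓝 0) :=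
    (Real.continuous_sqrt.tendsto' 0 0 Real.sqrt_zero).comp hprod
  have hlim := tendsto_integral_comp_add_smul_mul (integrable_stdGaussianPDF d) hc hM
    hsqrt (continuous_snd.tendsto (t₀, x₀))
  rw [integral_stdGaussianPDF, mul_one] at hlim
  refine (hlim.mono_left nhdsWithin_le_nhds).congr' ?_
  filter_upwards [self_mem_nhdsWithin] with p hp
  rw [hu, integral_mul_Kbs_eq n d f (Finset.prod_pos fun i _ => hp i)]

/-- `u(t,x) = ∫ f(y) K^{BS}(t;x,y) dy` attains the boundary value `f`
continuously at every point of `∂ℝ₊ⁿ × ℝ^d`. -/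
theorem brownian_sheet_boundary_value
    (n d : ℕ) (hn : 1 ≤ n) (hd : 1 ≤ d)
    (f : (Fin d → ℝ) → ℝ) (hb : ∃ M, ∀ y, |f y| ≤ M) (hc : Continuous f)
    (u : (Fin n → ℝ) → (Fin d → ℝ) → ℝ)
    (hu : ∀ t x, u t x = ∫ y : Fin d → ℝ, f y * Kbs n d t x y)
    (t₀ : Fin n → ℝ) (ht₀ : ∀ i, 0 ≤ t₀ i) (hbdry : ∃ i, t₀ i = 0)
    (x₀ : Fin d → ℝ) :
    Filter.Tendsto (fun p : (Fin n → ℝ) × (Fin d → ℝ) => u p.1 p.2)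
      (nhdsWithin (t₀, x₀) {p : (Fin n → ℝ) × (Fin d → ℝ) | ∀ i, 0 < p.1 i})
      (nhds (f x₀)) :=
  brownian_sheet_boundary_value_general n d f hb hc u hu t₀ hbdry x₀
end
end

section
/- Let f : ℝ^d → ℝ be bounded and continuous, and define u(t,x) = ∫_{ℝ^d} f(y) K^{BS}(t;x,y) dy for t ∈ (0,∞)ⁿ, x ∈ ℝ^d. Then u is a bounded solution of the nonlinear second order PDE (∂u/∂t₁)(∂u/∂t₂)⋯(∂u/∂t_n) = ((t₁ t₂ ⋯ t_n)^{n−1} / 2ⁿ) (Δ_x u)ⁿ for every t ∈ (0,∞)ⁿ and x ∈ ℝ^d. -/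
open MeasureTheory Real Filter Finset

noncomputable section

/-! With `s = t₁⋯t_n` the Brownian sheet kernel is the heat kernel at time `s`, so
`u(t, x) = v(t₁⋯t_n, x)` with `v(s, ·)` the heat semigroup applied to `f`; in particular
`|u| ≤ sup |f|`, the kernel being a probability density. The derivatives of the Gaussian that occur
are polynomials in `x - y` times the Gaussian, and near any point these are dominated by a wider
Gaussian, so one may differentiate under the integral sign: `∂v/∂s = ½ Δ_x v`. By the chain rule
`∂u/∂t_j = (∏_{i ≠ j} t_i) · ½ Δ_x v`, and `∏_j ∏_{i ≠ j} t_i = (t₁⋯t_n)^{n-1}`. -/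

def sqDist {d : ℕ} (x y : Fin d → ℝ) : ℝ := ∑ k, (x k - y k) ^ 2

section SqDist

variable {d : ℕ}

lemma sqDist_comm (x y : Fin d → ℝ) : sqDist x y = sqDist y x := by
  simp only [sqDist, ← neg_sub (x _), neg_sq]

lemma sqDist_nonneg (x y : Fin d → ℝ) : 0 ≤ sqDist x y := by
  unfold sqDist; positivity

@[fun_prop]
lemma continuous_sqDist_right (x : Fin d → ℝ) : Continuous (sqDist x) := by
  unfold sqDist; fun_prop

lemma sq_sub_le_sqDist (x y : Fin d → ℝ) (k : Fin d) : (x k - y k) ^ 2 ≤ sqDist x y :=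
  single_le_sum (f := fun j => (x j - y j) ^ 2) (fun _ _ => sq_nonneg _) (mem_univ k)

lemma abs_sub_le_one_add_sqDist (x y : Fin d → ℝ) (k : Fin d) :
    |x k - y k| ≤ 1 + sqDist x y := by
  nlinarith [sq_sub_le_sqDist x y k, sq_abs (x k - y k), sq_nonneg (|x k - y k| - 1)]

lemma abs_neg_sub_div_le_one_add_sqDist {s : ℝ} (hs : 0 < s) (x y : Fin d → ℝ) (k : Fin d) :
    |-(x k - y k) / s| ≤ 1 / s * (1 + sqDist x y) := by
  rw [abs_div, abs_neg, abs_of_pos hs, div_eq_inv_mul, one_div]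
  gcongr
  exact abs_sub_le_one_add_sqDist x y k

lemma sqDist_le_two_mul_add (x x₀ y : Fin d → ℝ) :
    sqDist x₀ y ≤ 2 * (sqDist x y + sqDist x₀ x) := by
  unfold sqDist
  rw [← sum_add_distrib, mul_sum]
  gcongr with k
  nlinarith [sq_nonneg (x k - y k - (x₀ k - x k))]

lemma exp_neg_sqDist_div_le {c : ℝ} (hc : 0 < c) (x x₀ y : Fin d → ℝ) :
    Real.exp (-sqDist x y / c)
      ≤ Real.exp (sqDist x₀ x / c) * Real.exp (-sqDist x₀ y / (2 * c)) := by
  rw [← Real.exp_add]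
  gcongr Real.exp ?_
  have hdiff : sqDist x₀ x / c + -sqDist x₀ y / (2 * c) - -sqDist x y / c
      = (2 * sqDist x₀ x + 2 * sqDist x y - sqDist x₀ y) / (2 * c) := by
    field_simp; ring
  have := sqDist_le_two_mul_add x x₀ y
  have : 0 ≤ (2 * sqDist x₀ x + 2 * sqDist x y - sqDist x₀ y) / (2 * c) :=
    div_nonneg (by linarith) (by positivity)
  linarith

lemma sqDist_update_left (x y : Fin d → ℝ) (k : Fin d) (h : ℝ) :
    sqDist (Function.update x k h) y = sqDist x y - (x k - y k) ^ 2 + (h - y k) ^ 2 := by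
  unfold sqDist
  rw [← Finset.add_sum_erase _ _ (mem_univ k), ← Finset.add_sum_erase _ _ (mem_univ k)]
  simp only [Function.update_self]
  rw [Finset.sum_congr rfl fun j hj => by rw [Function.update_of_ne (ne_of_mem_erase hj)]]
  ring

lemma sqDist_update_right_self (x : Fin d → ℝ) (k : Fin d) (h : ℝ) :
    sqDist x (Function.update x k h) = (h - x k) ^ 2 := by
  rw [sqDist_comm, sqDist_update_left]
  simp [sqDist]

lemma sqDist_update_right_self_le_one {x : Fin d → ℝ} {k : Fin d} {h : ℝ}
    (hh : h ∈ Metric.ball (x k) 1) : sqDist x (Function.update x k h) ≤ 1 := by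
  rw [Metric.mem_ball, Real.dist_eq] at hh
  rw [sqDist_update_right_self, ← sq_abs]
  nlinarith [abs_nonneg (h - x k)]

lemma hasDerivAt_sqDist_update (x y : Fin d → ℝ) (k : Fin d) (h : ℝ) :
    HasDerivAt (fun h => sqDist (Function.update x k h) y) (2 * (h - y k)) h := by
  simp_rw [sqDist_update_left]
  simpa using (((hasDerivAt_id h).sub_const (y k)).fun_pow 2).const_add
    (sqDist x y - (x k - y k) ^ 2)

end SqDist

lemma one_add_mul_exp_neg_le {c r : ℝ} (hc : 0 < c) (hr : 0 ≤ r) :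
    (1 + r) * Real.exp (-r / (4 * c)) ≤ (1 + 8 * c) * Real.exp (-r / (8 * c)) := by
  set E := Real.exp (-r / (8 * c))
  have hlin : 1 + r ≤ (1 + 8 * c) * (1 + r / (8 * c)) := by
    have h : (1 + 8 * c) * (1 + r / (8 * c)) = 1 + r + (8 * c + r / (8 * c)) := by
      field_simp; ring
    have : 0 ≤ 8 * c + r / (8 * c) := by positivity
    linarith
  have hsplit : Real.exp (-r / (4 * c)) = E * E := by
    rw [← Real.exp_add]; ring_nf
  have hexp : (1 + r / (8 * c)) * E ≤ 1 :=
    calc (1 + r / (8 * c)) * E ≤ Real.exp (r / (8 * c)) * E := by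
          gcongr; linarith [Real.add_one_le_exp (r / (8 * c))]
      _ = 1 := by rw [← Real.exp_add, neg_div, add_neg_cancel, Real.exp_zero]
  calc (1 + r) * Real.exp (-r / (4 * c))
      ≤ (1 + 8 * c) * (1 + r / (8 * c)) * E * E := by rw [hsplit, ← mul_assoc]; gcongr
    _ = (1 + 8 * c) * ((1 + r / (8 * c)) * E) * E := by ring
    _ ≤ (1 + 8 * c) * 1 * E := by gcongr
    _ = (1 + 8 * c) * E := by ring

lemma abs_div_sq_sub_div_le {P Q D s σ : ℝ} (hP : 0 ≤ P) (hPQ : P ≤ Q) (hD : 0 ≤ D)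
    (hs : 0 < s) (hσ : s / 2 ≤ σ) :
    |P / σ ^ 2 - D / σ| ≤ (4 / s ^ 2 + 2 * D / s) * (1 + Q) := by
  have hσ₀ : 0 < σ := by linarith
  have hQ : 0 ≤ Q := hP.trans hPQ
  have h₁ : P / σ ^ 2 ≤ 4 / s ^ 2 * Q :=
    calc P / σ ^ 2 ≤ Q / (s / 2) ^ 2 := by gcongr
      _ = 4 / s ^ 2 * Q := by field_simp; ring
  have h₂ : D / σ ≤ 2 * D / s :=
    calc D / σ ≤ D / (s / 2) := by gcongr
      _ = 2 * D / s := by field_simp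
  have h₃ : 0 ≤ P / σ ^ 2 := by positivity
  have h₄ : 0 ≤ D / σ := by positivity
  have h₅ : 0 ≤ 4 / s ^ 2 := by positivity
  have h₆ : 0 ≤ 2 * D / s := by positivity
  rw [abs_le]
  constructor <;> nlinarith

lemma hasDerivAt_integral_mul_of_dominated {α : Type*} [MeasurableSpace α] {μ : Measure α}
    {f : α → ℝ} {M : ℝ} (hf : AEStronglyMeasurable f μ) (hfM : ∀ y, |f y| ≤ M)
    {G G' : ℝ → α → ℝ} {a ε : ℝ} {bound : α → ℝ} (hε : 0 < ε)
    (hG_meas : ∀ h, AEStronglyMeasurable (G h) μ) (hG_int : Integrable (G a) μ)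
    (hG'_meas : AEStronglyMeasurable (G' a) μ)
    (hG'_le : ∀ y, ∀ h ∈ Metric.ball a ε, |G' h y| ≤ bound y) (h_bound : Integrable bound μ)
    (hG' : ∀ y, ∀ h ∈ Metric.ball a ε, HasDerivAt (G · y) (G' h y) h) :
    HasDerivAt (fun h => ∫ y, f y * G h y ∂μ) (∫ y, f y * G' a y ∂μ) a :=
  (hasDerivAt_integral_of_dominated_loc_of_deriv_le (Metric.ball_mem_nhds a hε)
    (Eventually.of_forall fun h => hf.mul (hG_meas h))
    (hG_int.bdd_mul hf (ae_of_all _ fun y => hfM y)) (hf.mul hG'_meas)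
    (ae_of_all _ fun y h hh => by
      rw [Real.norm_eq_abs, abs_mul]
      exact mul_le_mul (hfM y) (hG'_le y h hh) (abs_nonneg _) ((abs_nonneg _).trans (hfM y)))
    (h_bound.const_mul M)
    (ae_of_all _ fun y h hh => (hG' y h hh).const_mul (f y))).2

lemma prod_prod_erase {ι M : Type*} [Fintype ι] [DecidableEq ι] [CommMonoid M] (t : ι → M) :
    ∏ j, ∏ i ∈ univ.erase j, t i = (∏ i, t i) ^ (Fintype.card ι - 1) := by
  simp_rw [← filter_ne', prod_filter]
  rw [Finset.prod_comm, ← Finset.prod_pow]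
  refine prod_congr rfl fun i _ => ?_
  rw [← prod_filter, filter_ne, prod_const, card_erase_of_mem (mem_univ i), card_univ]

lemma pd_comp_prod {n : ℕ} {g : ℝ → ℝ} {g' : ℝ} (t : Fin n → ℝ) (j : Fin n)
    (hg : HasDerivAt g g' (∏ i, t i)) :
    pd j (fun t => g (∏ i, t i)) t = g' * ∏ i ∈ univ.erase j, t i := by
  have hprod : ∀ h, ∏ i, Function.update t j h i = h * ∏ i ∈ univ.erase j, t i := fun h => by
    rw [prod_update_of_mem (mem_univ j), sdiff_singleton_eq_erase]
  rw [← mul_prod_erase univ t (mem_univ j)] at hg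
  simp only [pd, hprod]
  exact (hg.comp (t j) (hasDerivAt_mul_const _)).deriv

lemma Kbm_eq_gaussianPDFReal {s : ℝ} (hs : 0 ≤ s) (w : ℝ) :
    Kbm s w = ProbabilityTheory.gaussianPDFReal 0 s.toNNReal w := by
  simp only [Kbm, ProbabilityTheory.gaussianPDFReal, Real.coe_toNNReal _ hs, sub_zero]
  rw [Real.sqrt_eq_rpow, ← Real.rpow_neg (by positivity)]
  ring_nf

def heatKernel (d : ℕ) (s : ℝ) (x y : Fin d → ℝ) : ℝ :=
  (2 * π * s) ^ (-(d : ℝ) / 2) * Real.exp (-sqDist x y / (2 * s))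

namespace heatKernel

variable {d : ℕ} {s : ℝ}

lemma nonneg (hs : 0 ≤ s) (x y : Fin d → ℝ) : 0 ≤ heatKernel d s x y := by
  unfold heatKernel; positivity

@[fun_prop]
lemma continuous (s : ℝ) (x : Fin d → ℝ) : Continuous (heatKernel d s x) := by
  unfold heatKernel; fun_prop

lemma eq_prod_Kbm (hs : 0 ≤ s) (x y : Fin d → ℝ) :
    heatKernel d s x y = ∏ k, Kbm s (x k - y k) := by
  simp only [heatKernel, Kbm, prod_mul_distrib, prod_const, card_univ, Fintype.card_fin,
    ← Real.exp_sum, sqDist, ← sum_div, sum_neg_distrib]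
  rw [← Real.rpow_natCast, ← Real.rpow_mul (by positivity)]
  ring_nf

lemma integrable (hs : 0 < s) (x : Fin d → ℝ) : Integrable (heatKernel d s x) := by
  have hK : heatKernel d s x = fun y => ∏ k, Kbm s (x k - y k) :=
    funext (eq_prod_Kbm hs.le x)
  rw [hK]
  refine Integrable.fintype_prod (f := fun k w => Kbm s (x k - w)) fun k => ?_
  simp only [Kbm_eq_gaussianPDFReal hs.le]
  exact (ProbabilityTheory.integrable_gaussianPDFReal _ _).comp_sub_left (x k)

lemma integral_eq_one (hs : 0 < s) (x : Fin d → ℝ) : ∫ y, heatKernel d s x y = 1 := by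
  simp only [eq_prod_Kbm hs.le x]
  rw [integral_fintype_prod_volume_eq_prod (fun k w => Kbm s (x k - w))]
  refine prod_eq_one fun k _ => ?_
  simp only [Kbm_eq_gaussianPDFReal hs.le]
  rw [integral_sub_left_eq_self (ProbabilityTheory.gaussianPDFReal 0 s.toNNReal)]
  exact ProbabilityTheory.integral_gaussianPDFReal_eq_one 0 (Real.toNNReal_pos.mpr hs).ne'

lemma hasDerivAt_time (hs : 0 < s) (x y : Fin d → ℝ) :
    HasDerivAt (fun s => heatKernel d s x y)
      ((sqDist x y / s ^ 2 - d / s) / 2 * heatKernel d s x y) s := by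
  have hb : 0 < 2 * π * s := by positivity
  have hpow := ((hasDerivAt_id s).const_mul (2 * π)).rpow_const (p := -(d : ℝ) / 2)
    (Or.inl hb.ne')
  have hexp := (((hasDerivAt_inv hs.ne').const_mul (-sqDist x y / 2))).exp
  have hK : (fun s => heatKernel d s x y)
      = fun s => (2 * π * id s) ^ (-(d : ℝ) / 2) * Real.exp (-sqDist x y / 2 * s⁻¹) := by
    funext s; simp only [heatKernel, id]; ring_nf
  rw [hK]
  refine (hpow.mul hexp).congr_deriv ?_
  simp only [heatKernel, id, Real.rpow_sub_one hb.ne']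
  field_simp
  ring

lemma hasDerivAt_update (hs : 0 < s) (x y : Fin d → ℝ) (k : Fin d) (h : ℝ) :
    HasDerivAt (fun h => heatKernel d s (Function.update x k h) y)
      (-(h - y k) / s * heatKernel d s (Function.update x k h) y) h := by
  refine ((((hasDerivAt_sqDist_update x y k h).fun_neg).div_const (2 * s)).exp.const_mul
    ((2 * π * s) ^ (-(d : ℝ) / 2))).congr_deriv ?_
  simp only [heatKernel]
  field_simp

lemma hasDerivAt_update_update (hs : 0 < s) (x y : Fin d → ℝ) (k : Fin d) (h : ℝ) :
    HasDerivAt (fun h => -(h - y k) / s * heatKernel d s (Function.update x k h) y)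
      (((h - y k) ^ 2 / s ^ 2 - 1 / s) * heatKernel d s (Function.update x k h) y) h := by
  have hlin : HasDerivAt (fun h => -(h - y k) / s) (-1 / s) h := by
    simpa using (((hasDerivAt_id h).sub_const (y k)).neg).div_const s
  refine (hlin.mul (hasDerivAt_update hs x y k h)).congr_deriv ?_
  field_simp
  ring

lemma le_of_half_le_of_le_two_mul {s₀ : ℝ} (hs₀ : 0 < s₀) (hs₁ : s₀ / 2 ≤ s) (hs₂ : s ≤ 2 * s₀)
    (x y : Fin d → ℝ) :
    heatKernel d s x y ≤ (π * s₀) ^ (-(d : ℝ) / 2) * Real.exp (-sqDist x y / (4 * s₀)) := by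
  have hs : 0 < s := by linarith
  have hpre : (2 * π * s) ^ (-(d : ℝ) / 2) ≤ (π * s₀) ^ (-(d : ℝ) / 2) :=
    Real.rpow_le_rpow_of_nonpos (by positivity) (by nlinarith [pi_pos])
      (by have := d.cast_nonneg (α := ℝ); linarith)
  have hexp : Real.exp (-sqDist x y / (2 * s)) ≤ Real.exp (-sqDist x y / (4 * s₀)) := by
    gcongr Real.exp ?_
    rw [neg_div, neg_div, neg_le_neg_iff]
    exact div_le_div_of_nonneg_left (sqDist_nonneg x y) (by positivity) (by linarith)
  exact mul_le_mul hpre hexp (Real.exp_pos _).le (by positivity)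

lemma exists_one_add_sqDist_mul_le {s₀ : ℝ} (hs₀ : 0 < s₀) (x₀ : Fin d → ℝ) :
    ∃ C, ∀ s x y, s₀ / 2 ≤ s → s ≤ 2 * s₀ → sqDist x₀ x ≤ 1 →
      (1 + sqDist x y) * heatKernel d s x y ≤ C * heatKernel d (8 * s₀) x₀ y := by
  set A := (π * s₀) ^ (-(d : ℝ) / 2)
  set B := 2 * π * (8 * s₀)
  refine ⟨A * (1 + 8 * s₀) * Real.exp (1 / (8 * s₀)) * B ^ ((d : ℝ) / 2),
    fun s x y hs₁ hs₂ hx => ?_⟩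
  have hQ := sqDist_nonneg x y
  calc (1 + sqDist x y) * heatKernel d s x y
      ≤ (1 + sqDist x y) * (A * Real.exp (-sqDist x y / (4 * s₀))) := by
        gcongr; exact le_of_half_le_of_le_two_mul hs₀ hs₁ hs₂ x y
    _ = A * ((1 + sqDist x y) * Real.exp (-sqDist x y / (4 * s₀))) := by ring
    _ ≤ A * ((1 + 8 * s₀) * Real.exp (-sqDist x y / (8 * s₀))) := by
        exact mul_le_mul_of_nonneg_left (one_add_mul_exp_neg_le hs₀ hQ) (by positivity)
    _ ≤ A * ((1 + 8 * s₀) *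
          (Real.exp (sqDist x₀ x / (8 * s₀)) * Real.exp (-sqDist x₀ y / (2 * (8 * s₀))))) := by
        gcongr; exact exp_neg_sqDist_div_le (by positivity) x x₀ y
    _ ≤ A * ((1 + 8 * s₀) *
          (Real.exp (1 / (8 * s₀)) * Real.exp (-sqDist x₀ y / (2 * (8 * s₀))))) := by
        gcongr
    _ = _ := by
        have hB : 0 < B := by positivity
        rw [heatKernel, neg_div (2 : ℝ), Real.rpow_neg hB.le]
        field_simp

variable {x y : Fin d → ℝ}

lemma abs_mul_le_of_abs_le {g c B : ℝ} (hs : 0 ≤ s) (hg : |g| ≤ c * (1 + sqDist x y))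
    (hB : (1 + sqDist x y) * heatKernel d s x y ≤ B) :
    |g * heatKernel d s x y| ≤ c * B := by
  have hQ : 0 < 1 + sqDist x y := by linarith [sqDist_nonneg x y]
  have hc : 0 ≤ c := nonneg_of_mul_nonneg_left ((abs_nonneg g).trans hg) hQ
  rw [abs_mul, abs_of_nonneg (nonneg hs x y)]
  calc |g| * heatKernel d s x y ≤ c * (1 + sqDist x y) * heatKernel d s x y := by
        gcongr; exact nonneg hs x y
    _ = c * ((1 + sqDist x y) * heatKernel d s x y) := by ring
    _ ≤ c * B := by gcongr

lemma integrable_mul_of_abs_le {g : (Fin d → ℝ) → ℝ} {c : ℝ} (hs : 0 < s)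
    (hg : AEStronglyMeasurable g) (hgc : ∀ y, |g y| ≤ c * (1 + sqDist x y)) :
    Integrable (fun y => g y * heatKernel d s x y) := by
  obtain ⟨C, hC⟩ := exists_one_add_sqDist_mul_le hs x
  refine Integrable.mono' (((integrable (s := 8 * s) (by positivity) x).const_mul C).const_mul c)
    (hg.mul (continuous s x).aestronglyMeasurable) (ae_of_all _ fun y => ?_)
  exact abs_mul_le_of_abs_le hs.le (hgc y)
    (hC s x y (by linarith) (by linarith) (by simp [sqDist]))

end heatKernel

def heatSemigroup {d : ℕ} (f : (Fin d → ℝ) → ℝ) (s : ℝ) (x : Fin d → ℝ) : ℝ :=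
  ∫ y, f y * heatKernel d s x y

namespace heatSemigroup

variable {d : ℕ} {f : (Fin d → ℝ) → ℝ} {M s : ℝ}

lemma abs_le (hfM : ∀ y, |f y| ≤ M) (hs : 0 < s) (x : Fin d → ℝ) :
    |heatSemigroup f s x| ≤ M := by
  calc |heatSemigroup f s x| ≤ ∫ y, M * heatKernel d s x y := by
        rw [← Real.norm_eq_abs, heatSemigroup]
        refine norm_integral_le_of_norm_le ((heatKernel.integrable hs x).const_mul M)
          (ae_of_all _ fun y => ?_)
        rw [Real.norm_eq_abs, abs_mul, abs_of_nonneg (heatKernel.nonneg hs.le x y)]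
        exact mul_le_mul_of_nonneg_right (hfM y) (heatKernel.nonneg hs.le x y)
    _ = M := by rw [integral_const_mul, heatKernel.integral_eq_one hs x, mul_one]

variable (hf : AEStronglyMeasurable f) (hfM : ∀ y, |f y| ≤ M) (hs : 0 < s)
include hf hfM hs

lemma hasDerivAt_time (x : Fin d → ℝ) :
    HasDerivAt (fun s => heatSemigroup f s x)
      (∫ y, f y * ((sqDist x y / s ^ 2 - d / s) / 2 * heatKernel d s x y)) s := by
  obtain ⟨C, hC⟩ := heatKernel.exists_one_add_sqDist_mul_le hs x
  refine hasDerivAt_integral_mul_of_dominated hf hfM (half_pos hs)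
    (fun σ => (heatKernel.continuous σ x).aestronglyMeasurable) (heatKernel.integrable hs x)
    (Continuous.aestronglyMeasurable (by fun_prop)) (fun y σ hσ => ?_)
    (((heatKernel.integrable (s := 8 * s) (by positivity) x).const_mul C).const_mul
      (4 / s ^ 2 + 2 * d / s))
    (fun y σ hσ => heatKernel.hasDerivAt_time (by
      rw [Metric.mem_ball, Real.dist_eq, abs_lt] at hσ; linarith) x y)
  rw [Metric.mem_ball, Real.dist_eq, abs_lt] at hσ
  have hfactor : |(sqDist x y / σ ^ 2 - d / σ) / 2| ≤ (4 / s ^ 2 + 2 * d / s) * (1 + sqDist x y) :=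
    calc |(sqDist x y / σ ^ 2 - d / σ) / 2| ≤ |sqDist x y / σ ^ 2 - d / σ| := by
          rw [abs_div, abs_two]; linarith [abs_nonneg (sqDist x y / σ ^ 2 - d / σ)]
      _ ≤ _ := abs_div_sq_sub_div_le (sqDist_nonneg x y) le_rfl d.cast_nonneg hs (by linarith)
  exact heatKernel.abs_mul_le_of_abs_le (by linarith) hfactor
    (hC σ x y (by linarith) (by linarith) (by simp [sqDist]))

lemma hasDerivAt_update (x : Fin d → ℝ) (k : Fin d) :
    HasDerivAt (fun h => heatSemigroup f s (Function.update x k h))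
      (∫ y, f y * (-(x k - y k) / s * heatKernel d s x y)) (x k) := by
  obtain ⟨C, hC⟩ := heatKernel.exists_one_add_sqDist_mul_le hs x
  have hbound : ∀ y, ∀ h ∈ Metric.ball (x k) 1,
      |-(h - y k) / s * heatKernel d s (Function.update x k h) y|
        ≤ 1 / s * (C * heatKernel d (8 * s) x y) := by
    intro y h hh
    have hfactor := abs_neg_sub_div_le_one_add_sqDist hs (Function.update x k h) y k
    rw [Function.update_self] at hfactor
    exact heatKernel.abs_mul_le_of_abs_le hs.le hfactor
      (hC s _ y (by linarith) (by linarith) (sqDist_update_right_self_le_one hh))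
  have key := hasDerivAt_integral_mul_of_dominated hf hfM one_pos (a := x k)
    (G := fun h y => heatKernel d s (Function.update x k h) y)
    (fun h => (heatKernel.continuous s _).aestronglyMeasurable)
    (heatKernel.integrable hs _) (Continuous.aestronglyMeasurable (by fun_prop)) hbound
    (((heatKernel.integrable (s := 8 * s) (by positivity) x).const_mul C).const_mul (1 / s))
    (fun y h _ => heatKernel.hasDerivAt_update hs x y k h)
  simpa only [heatSemigroup, Function.update_eq_self] using key

lemma hasDerivAt_update_update (x : Fin d → ℝ) (k : Fin d) :
    HasDerivAt (fun h => ∫ y, f y * (-(h - y k) / s * heatKernel d s (Function.update x k h) y))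
      (∫ y, f y * (((x k - y k) ^ 2 / s ^ 2 - 1 / s) * heatKernel d s x y)) (x k) := by
  obtain ⟨C, hC⟩ := heatKernel.exists_one_add_sqDist_mul_le hs x
  have hbound : ∀ y, ∀ h ∈ Metric.ball (x k) 1,
      |((h - y k) ^ 2 / s ^ 2 - 1 / s) * heatKernel d s (Function.update x k h) y|
        ≤ (4 / s ^ 2 + 2 * 1 / s) * (C * heatKernel d (8 * s) x y) := by
    intro y h hh
    have hsq := sq_sub_le_sqDist (Function.update x k h) y k
    rw [Function.update_self] at hsq
    exact heatKernel.abs_mul_le_of_abs_le hs.le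
      (abs_div_sq_sub_div_le (sq_nonneg _) hsq zero_le_one hs (by linarith))
      (hC s _ y (by linarith) (by linarith) (sqDist_update_right_self_le_one hh))
  have hint : Integrable (fun y => -(x k - y k) / s * heatKernel d s x y) :=
    heatKernel.integrable_mul_of_abs_le hs (Continuous.aestronglyMeasurable (by fun_prop))
      (abs_neg_sub_div_le_one_add_sqDist hs x · k)
  have key := hasDerivAt_integral_mul_of_dominated hf hfM one_pos (a := x k)
    (G := fun h y => -(h - y k) / s * heatKernel d s (Function.update x k h) y)
    (fun h => Continuous.aestronglyMeasurable (by fun_prop))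
    (by simpa only [Function.update_eq_self] using hint)
    (Continuous.aestronglyMeasurable (by fun_prop)) hbound
    (((heatKernel.integrable (s := 8 * s) (by positivity) x).const_mul C).const_mul _)
    (fun y h _ => heatKernel.hasDerivAt_update_update hs x y k h)
  simpa only [Function.update_eq_self] using key

lemma pd_eq (x : Fin d → ℝ) (k : Fin d) :
    pd k (heatSemigroup f s) x = ∫ y, f y * (-(x k - y k) / s * heatKernel d s x y) :=
  (hasDerivAt_update hf hfM hs x k).deriv

lemma pd_pd_eq (x : Fin d → ℝ) (k : Fin d) :
    pd k (pd k (heatSemigroup f s)) x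
      = ∫ y, f y * (((x k - y k) ^ 2 / s ^ 2 - 1 / s) * heatKernel d s x y) := by
  rw [funext (pd_eq hf hfM hs · k), pd]
  simp only [Function.update_self]
  exact (hasDerivAt_update_update hf hfM hs x k).deriv

lemma lap_eq (x : Fin d → ℝ) :
    lap (heatSemigroup f s) x
      = ∫ y, f y * ((sqDist x y / s ^ 2 - d / s) * heatKernel d s x y) := by
  have hint : ∀ k : Fin d, Integrable
      (fun y => f y * (((x k - y k) ^ 2 / s ^ 2 - 1 / s) * heatKernel d s x y)) := fun k =>
    (heatKernel.integrable_mul_of_abs_le hs (Continuous.aestronglyMeasurable (by fun_prop))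
      fun y => abs_div_sq_sub_div_le (sq_nonneg _) (sq_sub_le_sqDist x y k) zero_le_one hs
        (by linarith)).bdd_mul hf (ae_of_all _ hfM)
  rw [lap, Finset.sum_congr rfl fun k _ => pd_pd_eq hf hfM hs x k,
    ← integral_finsetSum _ fun k _ => hint k]
  congr 1 with y
  rw [← mul_sum, ← sum_mul, sum_sub_distrib, ← sum_div, sum_const, card_univ, Fintype.card_fin,
    nsmul_eq_mul, sqDist, mul_one_div]

theorem hasDerivAt_time_eq_half_lap (x : Fin d → ℝ) :
    HasDerivAt (fun s => heatSemigroup f s x) (lap (heatSemigroup f s) x / 2) s := by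
  refine (hasDerivAt_time hf hfM hs x).congr_deriv ?_
  rw [lap_eq hf hfM hs, ← integral_div]
  congr 1 with y
  ring

end heatSemigroup

theorem brownian_sheet_nonlinear_pde_general
    (n d : ℕ)
    (f : (Fin d → ℝ) → ℝ) (hb : ∃ M, ∀ y, |f y| ≤ M) (hc : Continuous f)
    (u : (Fin n → ℝ) → (Fin d → ℝ) → ℝ)
    (hu : ∀ t x, u t x = ∫ y : Fin d → ℝ, f y * Kbs n d t x y) :
    (∃ M, ∀ (t : Fin n → ℝ) (x : Fin d → ℝ), (∀ i, 0 < t i) → |u t x| ≤ M) ∧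
    ∀ (t : Fin n → ℝ), (∀ i, 0 < t i) → ∀ x : Fin d → ℝ,
      (∏ j, pd j (fun t' => u t' x) t)
        = ((∏ i, t i) ^ (n - 1) / 2 ^ n) * (lap (u t) x) ^ n := by
  obtain ⟨M, hM⟩ := hb
  -- `Kbs n d t` unfolds to `heatKernel d (∏ i, t i)`
  obtain rfl : u = fun t => heatSemigroup f (∏ i, t i) := funext fun t => funext (hu t)
  have hpos : ∀ t : Fin n → ℝ, (∀ i, 0 < t i) → 0 < ∏ i, t i := fun t ht =>
    prod_pos fun i _ => ht i
  refine ⟨⟨M, fun t x ht => heatSemigroup.abs_le hM (hpos t ht) x⟩, fun t ht x => ?_⟩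
  have hheat := heatSemigroup.hasDerivAt_time_eq_half_lap hc.aestronglyMeasurable hM
    (hpos t ht) x
  simp only [pd_comp_prod t _ hheat, prod_mul_distrib, prod_const, card_univ, Fintype.card_fin,
    prod_prod_erase]
  rw [div_pow]
  ring

/-- `u(t,x) = ∫ f(y) K^{BS}(t;x,y) dy` is a bounded solution of the
nonlinear second order PDE `∏_j ∂u/∂t_j = ((t₁⋯t_n)^{n-1}/2ⁿ)(Δ_x u)ⁿ`. -/
theorem brownian_sheet_nonlinear_pde
    (n d : ℕ) (hn : 1 ≤ n) (hd : 1 ≤ d)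
    (f : (Fin d → ℝ) → ℝ) (hb : ∃ M, ∀ y, |f y| ≤ M) (hc : Continuous f)
    (u : (Fin n → ℝ) → (Fin d → ℝ) → ℝ)
    (hu : ∀ t x, u t x = ∫ y : Fin d → ℝ, f y * Kbs n d t x y) :
    (∃ M, ∀ (t : Fin n → ℝ) (x : Fin d → ℝ), (∀ i, 0 < t i) → |u t x| ≤ M) ∧
    ∀ (t : Fin n → ℝ), (∀ i, 0 < t i) → ∀ x : Fin d → ℝ,
      (∏ j, pd j (fun t' => u t' x) t)
        = ((∏ i, t i) ^ (n - 1) / 2 ^ n) * (lap (u t) x) ^ n :=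
  brownian_sheet_nonlinear_pde_general n d f hb hc u hu
end
end
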